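/- arXiv:2005.10087 — 4 statements merged into one kernel-verified Lean document; each statement's English description precedes it below -/
import Mathlib

section
/- Let Σ be a p×p complex Hermitian positive definite matrix, let ξ_Σ and η_Σ be p×p complex Hermitian matrices satisfying tr(Σ⁻¹ ξ_Σ) = 0 and tr(Σ⁻¹ η_Σ) = 0, let τ ∈ ℝⁿ have all entries positive, and let ξ_τ, η_τ ∈ ℝⁿ. Then ∑_{i=1}^n tr((τ_i Σ)⁻¹ (ξ_{τ,i} Σ + τ_i ξ_Σ)(τ_i Σ)⁻¹ (η_{τ,i} Σ + τ_i η_Σ)) = n·p · [ (1/p) tr(Σ⁻¹ ξ_Σ Σ⁻¹ η_Σ) + (1/n) ∑_{i=1}^n ξ_{τ,i} η_{τ,i}/τ_i² ]. -/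
open Matrix Finset
open scoped ComplexOrder

/-!
Since `(τ Σ)⁻¹ (ξ Σ + τ X) = (ξ / τ) • 1 + Σ⁻¹ X`, each summand is the trace of a product of
two matrices of the form `α • 1 + A` with `tr A = 0`; such a trace is `α β p + tr (A B)`.
Summing over `i` gives `p ∑ ξτ ητ / τ² + n tr (Σ⁻¹ ξΣ Σ⁻¹ ηΣ)`.
-/

namespace Matrix

variable {ι K : Type*} [Fintype ι] [DecidableEq ι]

theorem trace_smul_one_add_mul_smul_one_add [CommRing K] {A B : Matrix ι ι K}
    (hA : trace A = 0) (hB : trace B = 0) (α β : K) :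
    trace ((α • 1 + A) * (β • 1 + B)) = α * β * Fintype.card ι + trace (A * B) := by
  simp only [Matrix.add_mul, Matrix.mul_add, Matrix.smul_mul, Matrix.mul_smul, Matrix.one_mul,
    Matrix.mul_one, trace_add, trace_smul, trace_one, hA, hB, smul_eq_mul]
  ring

variable [Field K]

theorem inv_smul_mul_smul_add {S : Matrix ι ι K} (hS : IsUnit S.det) (X : Matrix ι ι K)
    {c : K} (hc : c ≠ 0) (a : K) :
    (c • S)⁻¹ * (a • S + c • X) = (a / c) • 1 + S⁻¹ * X := by
  have := invertibleOfNonzero hc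
  rw [inv_smul S c hS, invOf_eq_inv, Matrix.mul_add,
    smul_mul_smul_comm, smul_mul_smul_comm, nonsing_inv_mul S hS, inv_mul_cancel₀ hc, one_smul,
    div_eq_inv_mul]

theorem trace_inv_smul_mul_smul_add_sq {S X Y : Matrix ι ι K} (hS : IsUnit S.det)
    (hX : trace (S⁻¹ * X) = 0) (hY : trace (S⁻¹ * Y) = 0) {c : K} (hc : c ≠ 0) (a b : K) :
    trace ((c • S)⁻¹ * (a • S + c • X) * (c • S)⁻¹ * (b • S + c • Y))
      = a * b / c ^ 2 * Fintype.card ι + trace (S⁻¹ * X * S⁻¹ * Y) := by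
  rw [Matrix.mul_assoc _ (c • S)⁻¹, inv_smul_mul_smul_add hS X hc,
    inv_smul_mul_smul_add hS Y hc, trace_smul_one_add_mul_smul_one_add hX hY, ← Matrix.mul_assoc]
  ring

end Matrix

theorem compound_gaussian_fisher_metric_general
    {p n : ℕ} (Sg ξS ηS : Matrix (Fin p) (Fin p) ℂ)
    (hS : Sg.PosDef)
    (hξ0 : Matrix.trace (Sg⁻¹ * ξS) = 0) (hη0 : Matrix.trace (Sg⁻¹ * ηS) = 0)
    (τ ξτ ητ : Fin n → ℝ) (hτ : ∀ i, 0 < τ i) :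
    ∑ i : Fin n,
      Matrix.trace (((τ i : ℂ) • Sg)⁻¹ * ((ξτ i : ℂ) • Sg + (τ i : ℂ) • ξS) *
        ((τ i : ℂ) • Sg)⁻¹ * ((ητ i : ℂ) • Sg + (τ i : ℂ) • ηS))
    = (n : ℂ) * (p : ℂ) *
        ((1 / (p : ℂ)) * Matrix.trace (Sg⁻¹ * ξS * Sg⁻¹ * ηS)
          + (1 / (n : ℂ)) * ((∑ i : Fin n, ξτ i * ητ i / (τ i) ^ 2 : ℝ) : ℂ)) := by
  set T := trace (Sg⁻¹ * ξS * Sg⁻¹ * ηS)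
  have hdet : IsUnit Sg.det := hS.det_pos.ne'.isUnit
  calc _ = ∑ i : Fin n, ((ξτ i : ℂ) * ητ i / (τ i : ℂ) ^ 2 * p + T) := by
        refine sum_congr rfl fun i _ => ?_
        rw [trace_inv_smul_mul_smul_add_sq hdet hξ0 hη0 (mod_cast (hτ i).ne'), Fintype.card_fin]
    _ = p * ∑ i : Fin n, (ξτ i : ℂ) * ητ i / (τ i : ℂ) ^ 2 + n * T := by
        rw [sum_add_distrib, ← sum_mul, sum_const, card_univ, Fintype.card_fin, nsmul_eq_mul,
          mul_comm]
    _ = _ := by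
      rcases Nat.eq_zero_or_pos p with rfl | hp
      · simp [T]
      rcases Nat.eq_zero_or_pos n with rfl | hn
      · simp
      push_cast
      field_simp
      ring

/-- Proposition 1 of the paper (Fisher information metric of the compound Gaussian
distribution): under the unit-determinant normalization, where tangent vectors `ξΣ` at `Σ`
are Hermitian with `tr(Σ⁻¹ ξΣ) = 0`, the sum of the Gaussian Fisher metrics at `τ i • Σ`
evaluated at the directional derivatives equals `n p` times
`(1/p) tr(Σ⁻¹ ξΣ Σ⁻¹ ηΣ) + (1/n) ∑ i ξτ i ητ i / (τ i)²`. -/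
theorem compound_gaussian_fisher_metric
    {p n : ℕ} (Sg ξS ηS : Matrix (Fin p) (Fin p) ℂ)
    (hS : Sg.PosDef) (hξS : ξS.IsHermitian) (hηS : ηS.IsHermitian)
    (hξ0 : Matrix.trace (Sg⁻¹ * ξS) = 0) (hη0 : Matrix.trace (Sg⁻¹ * ηS) = 0)
    (τ ξτ ητ : Fin n → ℝ) (hτ : ∀ i, 0 < τ i) :
    ∑ i : Fin n,
      Matrix.trace (((τ i : ℂ) • Sg)⁻¹ * ((ξτ i : ℂ) • Sg + (τ i : ℂ) • ξS) *
        ((τ i : ℂ) • Sg)⁻¹ * ((ητ i : ℂ) • Sg + (τ i : ℂ) • ηS))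
    = (n : ℂ) * (p : ℂ) *
        ((1 / (p : ℂ)) * Matrix.trace (Sg⁻¹ * ξS * Sg⁻¹ * ηS)
          + (1 / (n : ℂ)) * ((∑ i : Fin n, ξτ i * ητ i / (τ i) ^ 2 : ℝ) : ℂ)) :=
  compound_gaussian_fisher_metric_general Sg ξS ηS hS hξ0 hη0 τ ξτ ητ hτ
end

section
/- Let Σ₀ and Σ₁ be p×p complex Hermitian positive definite matrices and define γ(t) = Σ₀^{1/2} exp(t log(Σ₀^{-1/2} Σ₁ Σ₀^{-1/2})) Σ₀^{1/2}. Then for all real t, det γ(t) = (det Σ₀)^{1-t} · (det Σ₁)^t. In particular, if det Σ₀ = det Σ₁ = 1, then det γ(t) = 1 for all t. -/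
open Matrix
open scoped ComplexOrder

/-!
Put `Q = Σ₀^{1/2}`, `R = Σ₀^{-1/2}` and `M = R Σ₁ R`. By multiplicativity of the determinant,
`det γ(t) = det Σ₀ · det (exp (t log M))` and `det M = det Σ₁ / det Σ₀`. Diagonalising the
positive definite matrix `M` by its eigenvector unitary, `exp (t log M)` has eigenvalues `λᵢ ^ t`,
so its determinant is `(det M) ^ t`.
-/

namespace Matrix

variable {n 𝕜 : Type*} [Fintype n] [DecidableEq n] [RCLike 𝕜]

theorem IsHermitian.det_cfc {A : Matrix n n 𝕜} (hA : A.IsHermitian) (f : ℝ → ℝ) :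
    (cfc f A).det = ∏ i, (f (hA.eigenvalues i) : 𝕜) := by
  rw [hA.cfc_eq]
  simp [IsHermitian.cfc, -Unitary.conjStarAlgAut_apply]

theorem IsHermitian.exp_cfc {A : Matrix n n 𝕜} (hA : A.IsHermitian) (f : ℝ → ℝ) :
    NormedSpace.exp (cfc f A) = cfc (Real.exp ∘ f) A := by
  simp only [hA.cfc_eq, IsHermitian.cfc, Unitary.conjStarAlgAut_apply]
  refine (exp_units_conj (Unitary.toUnits hA.eigenvectorUnitary) _).trans ?_
  rw [exp_diagonal]
  congr 3
  ext i
  simp [Real.exp_eq_exp_ℝ, ← RCLike.algebraMap_eq_ofReal, NormedSpace.algebraMap_exp_comm]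

open scoped MatrixOrder in
theorem PosSemidef.cfc_sqrt_mul_self {A : Matrix n n 𝕜} (hA : A.PosSemidef) :
    cfc Real.sqrt A * cfc Real.sqrt A = A := by
  rw [← cfc_mul Real.sqrt Real.sqrt A]
  conv_rhs => rw [← cfc_id' ℝ A]
  exact cfc_congr fun x hx => Real.mul_self_sqrt (spectrum_nonneg_of_nonneg hA.nonneg hx)

theorem PosDef.re_det_eq_prod_eigenvalues {A : Matrix n n 𝕜} (hA : A.PosDef) :
    RCLike.re A.det = ∏ i, hA.1.eigenvalues i := by
  rw [hA.1.det_eq_prod_eigenvalues, ← RCLike.ofReal_prod, RCLike.ofReal_re]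

theorem PosDef.ofReal_re_det {A : Matrix n n 𝕜} (hA : A.PosDef) :
    (RCLike.re A.det : 𝕜) = A.det := by
  obtain ⟨x, -, hx⟩ := RCLike.pos_iff_exists_ofReal.mp hA.det_pos
  rw [← hx, RCLike.ofReal_re]

theorem PosDef.re_det_pos {A : Matrix n n 𝕜} (hA : A.PosDef) : 0 < RCLike.re A.det :=
  (RCLike.pos_iff.mp hA.det_pos).1

theorem PosDef.cfc_sqrt_inv_mul_mul_cfc_sqrt_inv {A B : Matrix n n 𝕜} (hA : A.PosDef)
    (hB : B.PosDef) : (cfc Real.sqrt A⁻¹ * B * cfc Real.sqrt A⁻¹).PosDef := by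
  set R := cfc Real.sqrt A⁻¹
  have hRu : IsUnit R := isUnit_of_mul_isUnit_left <| by
    rw [hA.inv.posSemidef.cfc_sqrt_mul_self]; exact hA.inv.isUnit
  have hRh : R.IsHermitian := isHermitian_iff_isSelfAdjoint.mpr IsSelfAdjoint.cfc
  simpa only [hRh.eq] using hB.conjTranspose_mul_mul_same (mulVec_injective_of_isUnit hRu)

theorem PosDef.det_exp_smul_cfc_log {A : Matrix n n 𝕜} (hA : A.PosDef) (t : ℝ) :
    (NormedSpace.exp (t • cfc Real.log A)).det = ((RCLike.re A.det ^ t : ℝ) : 𝕜) := by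
  rw [← cfc_const_mul t Real.log A (finite_real_spectrum.continuousOn _), hA.1.exp_cfc,
    hA.1.det_cfc, hA.re_det_eq_prod_eigenvalues,
    ← Real.finsetProd_rpow _ _ fun i _ => (hA.eigenvalues_pos i).le, RCLike.ofReal_prod]
  refine Finset.prod_congr rfl fun i _ => ?_
  rw [Function.comp_apply, Real.rpow_def_of_pos (hA.eigenvalues_pos i), mul_comm]

end Matrix

/-- Along the affine-invariant geodesic
`γ(t) = Σ₀^{1/2} exp(t log(Σ₀^{-1/2} Σ₁ Σ₀^{-1/2})) Σ₀^{1/2}` joining two Hermitian positive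
definite matrices `Σ₀, Σ₁`, the determinant interpolates geometrically:
`det γ(t) = (det Σ₀)^{1-t} (det Σ₁)^t` (the determinants being positive reals, the real
powers are well defined). In particular, if `det Σ₀ = det Σ₁ = 1` then `det γ(t) = 1` for all
`t`, i.e. `SH⁺⁺_p` is geodesically closed. -/
theorem geodesic_det_interpolation
    {p : ℕ} (S0 S1 : Matrix (Fin p) (Fin p) ℂ)
    (hS0 : S0.PosDef) (hS1 : S1.PosDef)
    (γ : ℝ → Matrix (Fin p) (Fin p) ℂ)
    (hγ : γ = fun t : ℝ =>
      cfc Real.sqrt S0 *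
        NormedSpace.exp
          ((t : ℂ) • cfc Real.log (cfc Real.sqrt S0⁻¹ * S1 * cfc Real.sqrt S0⁻¹)) *
        cfc Real.sqrt S0) :
    (∀ t : ℝ, (γ t).det = ((S0.det.re ^ (1 - t) * S1.det.re ^ t : ℝ) : ℂ)) ∧
      (S0.det = 1 → S1.det = 1 → ∀ t : ℝ, (γ t).det = 1) := by
  set Q := cfc Real.sqrt S0
  set R := cfc Real.sqrt S0⁻¹
  set s0 := S0.det.re
  set s1 := S1.det.re
  have hs0 : 0 < s0 := hS0.re_det_pos
  have hs1 : 0 ≤ s1 := hS1.re_det_pos.le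
  -- The closing `rfl`s identify `RCLike.ofReal` with the coercion `ℝ → ℂ`.
  have hQ : Q.det * Q.det = s0 := by
    rw [← det_mul, hS0.posSemidef.cfc_sqrt_mul_self, ← hS0.ofReal_re_det]; rfl
  have hR : R.det * R.det = (s0 : ℂ)⁻¹ := by
    rw [← det_mul, hS0.inv.posSemidef.cfc_sqrt_mul_self, det_nonsing_inv, Ring.inverse_eq_inv',
      ← hS0.ofReal_re_det]; rfl
  have hM : (R * S1 * R).PosDef := hS0.cfc_sqrt_inv_mul_mul_cfc_sqrt_inv hS1
  have hMdet : (R * S1 * R).det = ((s1 / s0 : ℝ) : ℂ) := by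
    rw [det_mul, det_mul, mul_right_comm, hR, ← hS1.ofReal_re_det, div_eq_inv_mul]
    push_cast
    rfl
  have hdet : ∀ t : ℝ, (γ t).det = ((s0 ^ (1 - t) * s1 ^ t : ℝ) : ℂ) := by
    intro t
    have hpow : s0 * (s1 / s0) ^ t = s0 ^ (1 - t) * s1 ^ t := by
      rw [Real.div_rpow hs1 hs0.le, Real.rpow_sub hs0, Real.rpow_one]
      field_simp
    rw [hγ, det_mul, det_mul, Complex.coe_smul, hM.det_exp_smul_cfc_log, mul_right_comm, hQ,
      hMdet, RCLike.re_to_complex, Complex.ofReal_re, ← hpow]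
    push_cast
    rfl
  refine ⟨hdet, fun h0 h1 t => ?_⟩
  simp [hdet, s0, s1, h0, h1]
end

section
/- Let τ ∈ ℝⁿ have all positive entries and ξ ∈ ℝⁿ, and define componentwise γ_i(t) = τ_i · exp(t ξ_i/τ_i) for t ∈ ℝ. Then each γ_i(t) is positive, γ is twice differentiable with γ_i(0) = τ_i and γ_i'(0) = ξ_i, and it satisfies the geodesic equation γ_i''(t) = γ_i'(t)² / γ_i(t) for all t ∈ ℝ and each i. -/
/-! Each component is a curve `t ↦ a exp(c t)`, whose derivative is `c` times itself; so its
second derivative is `c² a exp(c t) = (c a exp(c t))² / (a exp(c t))` as soon as `a ≠ 0`, and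
`c = ξᵢ / τᵢ` is exactly the choice making the initial velocity `a c` equal to `ξᵢ`. -/

section ConstMulExpMul

variable (a c : ℝ)

theorem differentiable_const_mul_exp_mul :
    Differentiable ℝ (fun t : ℝ => a * Real.exp (t * c)) := by
  fun_prop

theorem deriv_const_mul_exp_mul :
    deriv (fun t : ℝ => a * Real.exp (t * c)) = fun t => a * c * Real.exp (t * c) := by
  funext t
  exact (((hasDerivAt_id' t).mul_const c).exp.const_mul a).deriv.trans (by ring)

theorem deriv_deriv_const_mul_exp_mul_eq_sq_div {a : ℝ} (ha : a ≠ 0) (t : ℝ) :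
    deriv (deriv fun t : ℝ => a * Real.exp (t * c)) t
      = deriv (fun t : ℝ => a * Real.exp (t * c)) t ^ 2 / (a * Real.exp (t * c)) := by
  rw [deriv_const_mul_exp_mul, deriv_const_mul_exp_mul]
  field_simp

end ConstMulExpMul

/-- Texture geodesic of Proposition 2: for `τ ∈ ℝⁿ` with positive entries and `ξ ∈ ℝⁿ`, the
componentwise curve `γᵢ(t) = τᵢ exp(t ξᵢ/τᵢ)` is positive, twice differentiable with
`γᵢ(0) = τᵢ` and `γᵢ'(0) = ξᵢ`, and satisfies the geodesic equation `γᵢ'' = (γᵢ')²/γᵢ` of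
the metric `⟨ξ, η⟩_τ = ∑ᵢ ξᵢ ηᵢ/τᵢ²` on the positive orthant. -/
theorem texture_geodesic_initial_velocity
    {n : ℕ} (τ ξ : Fin n → ℝ) (hτ : ∀ i, 0 < τ i)
    (γ : Fin n → ℝ → ℝ)
    (hγ : γ = fun i (t : ℝ) => τ i * Real.exp (t * (ξ i / τ i))) :
    ∀ i : Fin n,
      (∀ t : ℝ, 0 < γ i t) ∧
      (∀ t : ℝ, DifferentiableAt ℝ (γ i) t ∧ DifferentiableAt ℝ (deriv (γ i)) t) ∧
      γ i 0 = τ i ∧ deriv (γ i) 0 = ξ i ∧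
      (∀ t : ℝ, deriv (deriv (γ i)) t = (deriv (γ i) t) ^ 2 / γ i t) := by
  intro i
  subst hγ
  have hτi : τ i ≠ 0 := (hτ i).ne'
  refine ⟨fun t => mul_pos (hτ i) (Real.exp_pos _), fun t => ⟨?_, ?_⟩, by simp, ?_,
    deriv_deriv_const_mul_exp_mul_eq_sq_div _ hτi⟩
  · exact differentiable_const_mul_exp_mul _ _ t
  · rw [deriv_const_mul_exp_mul]
    exact differentiable_const_mul_exp_mul _ _ t
  · rw [deriv_const_mul_exp_mul]
    simp only [zero_mul, Real.exp_zero, mul_one]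
    exact mul_div_cancel₀ _ hτi
end

section
/- Let Σ be a p×p complex Hermitian positive definite matrix, x₁, …, xₙ ∈ ℂᵖ, τ ∈ ℝⁿ with positive entries, and set a_i = Re(x_iᴴ Σ⁻¹ x_i). Define G_Σ = ∑_{i=1}^n (p · x_i x_iᴴ − a_i · Σ)/τ_i and G_τ ∈ ℝⁿ with (G_τ)_i = n(a_i − p τ_i). Then for every p×p complex Hermitian matrix ξ_Σ with tr(Σ⁻¹ ξ_Σ) = 0 and every ξ_τ ∈ ℝⁿ: (1/p) · Re tr(Σ⁻¹ G_Σ Σ⁻¹ ξ_Σ) + (1/n) · ∑_{i=1}^n (G_τ)_i ξ_{τ,i} / τ_i² = ∑_{i=1}^n [ (a_i − p τ_i)/τ_i² · ξ_{τ,i} + Re(x_iᴴ Σ⁻¹ ξ_Σ Σ⁻¹ x_i)/τ_i ]. -/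
open Matrix Finset
open scoped ComplexOrder

lemma trace_vecMulVec_mul' {p : ℕ} (u v : Fin p → ℂ) (N : Matrix (Fin p) (Fin p) ℂ) :
    Matrix.trace (Matrix.vecMulVec u v * N) = v ⬝ᵥ (N *ᵥ u) := by
  simp [Matrix.trace, Matrix.diag, Matrix.mul_apply, Matrix.vecMulVec_apply,
    dotProduct, Matrix.mulVec, Finset.mul_sum]
  rw [Finset.sum_comm]
  congr 1; ext j; congr 1; ext i; ring

/-- Proposition 3 of the paper: `(G_Σ, G_τ)` with `G_Σ = ∑ᵢ (p xᵢ xᵢᴴ − aᵢ Σ)/τᵢ` and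
`(G_τ)ᵢ = n(aᵢ − p τᵢ)`, where `aᵢ = Re(xᵢᴴ Σ⁻¹ xᵢ)`, is the Riemannian gradient of the
compound Gaussian log-likelihood: pairing it through the Fisher metric
`(1/p) Re tr(Σ⁻¹ G_Σ Σ⁻¹ ξ_Σ) + (1/n) ∑ᵢ (G_τ)ᵢ ξτᵢ/τᵢ²` against any tangent vector
(`ξ_Σ` Hermitian with `tr(Σ⁻¹ ξ_Σ) = 0`, `ξτ ∈ ℝⁿ`) returns the directional derivative of
the log-likelihood. -/
theorem riemannian_gradient_compound_gaussian
    {p n : ℕ} (hp : 0 < p) (hn : 0 < n)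
    (Sg : Matrix (Fin p) (Fin p) ℂ) (hS : Sg.PosDef)
    (x : Fin n → Fin p → ℂ) (τ : Fin n → ℝ) (hτ : ∀ i, 0 < τ i)
    (a : Fin n → ℝ) (ha : ∀ i, a i = (star (x i) ⬝ᵥ (Sg⁻¹ *ᵥ x i)).re)
    (GS : Matrix (Fin p) (Fin p) ℂ)
    (hGS : GS = ∑ i : Fin n, ((τ i : ℂ))⁻¹ •
      ((p : ℂ) • Matrix.vecMulVec (x i) (star (x i)) - (a i : ℂ) • Sg))
    (Gτ : Fin n → ℝ) (hGτ : ∀ i, Gτ i = n * (a i - p * τ i)) :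
    ∀ ξS : Matrix (Fin p) (Fin p) ℂ, ξS.IsHermitian → Matrix.trace (Sg⁻¹ * ξS) = 0 →
      ∀ ξτ : Fin n → ℝ,
        (1 / (p : ℝ)) * (Matrix.trace (Sg⁻¹ * GS * Sg⁻¹ * ξS)).re
            + (1 / (n : ℝ)) * ∑ i : Fin n, Gτ i * ξτ i / (τ i) ^ 2
          = ∑ i : Fin n,
              ((a i - p * τ i) / (τ i) ^ 2 * ξτ i
                + (star (x i) ⬝ᵥ ((Sg⁻¹ * ξS * Sg⁻¹) *ᵥ x i)).re / τ i) := by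
  intro ξS hξ htr ξτ
  have hdet : IsUnit Sg.det := isUnit_iff_ne_zero.2 hS.det_pos.ne'
  have hinv : Sg * Sg⁻¹ = 1 := Matrix.mul_nonsing_inv Sg hdet
  have key : Matrix.trace (Sg⁻¹ * GS * Sg⁻¹ * ξS)
      = ∑ i : Fin n, ((τ i : ℂ))⁻¹ * ((p : ℂ) *
          (star (x i) ⬝ᵥ ((Sg⁻¹ * ξS * Sg⁻¹) *ᵥ x i))) := by
    subst hGS
    rw [Matrix.mul_sum, Matrix.sum_mul, Matrix.sum_mul, Matrix.trace_sum]
    refine Finset.sum_congr rfl fun i _ => ?_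
    rw [Matrix.mul_smul, Matrix.smul_mul, Matrix.smul_mul, Matrix.trace_smul]
    congr 1
    rw [Matrix.mul_sub, Matrix.sub_mul, Matrix.sub_mul, Matrix.trace_sub]
    have h2 : Sg⁻¹ * ((a i : ℂ) • Sg) * Sg⁻¹ * ξS = (a i : ℂ) • (Sg⁻¹ * ξS) := by
      rw [Matrix.mul_smul, Matrix.smul_mul, Matrix.smul_mul]
      congr 1
      rw [Matrix.mul_assoc Sg⁻¹ Sg, Matrix.mul_assoc Sg⁻¹, hinv,
        Matrix.one_mul]
    rw [h2, Matrix.trace_smul, htr, smul_zero, sub_zero]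
    rw [Matrix.mul_smul, Matrix.smul_mul, Matrix.smul_mul, Matrix.trace_smul, smul_eq_mul]
    congr 1
    rw [show Sg⁻¹ * Matrix.vecMulVec (x i) (star (x i)) * Sg⁻¹ * ξS
        = Sg⁻¹ * (Matrix.vecMulVec (x i) (star (x i)) * (Sg⁻¹ * ξS)) by
      simp [Matrix.mul_assoc]]
    rw [Matrix.trace_mul_comm, Matrix.mul_assoc, trace_vecMulVec_mul']
  rw [key]
  have hre : (∑ i : Fin n, ((τ i : ℂ))⁻¹ * ((p : ℂ) *
      (star (x i) ⬝ᵥ ((Sg⁻¹ * ξS * Sg⁻¹) *ᵥ x i)))).re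
      = ∑ i : Fin n, (τ i)⁻¹ * ((p : ℝ) *
          (star (x i) ⬝ᵥ ((Sg⁻¹ * ξS * Sg⁻¹) *ᵥ x i)).re) := by
    rw [Complex.re_sum]
    refine Finset.sum_congr rfl fun i _ => ?_
    rw [show ((τ i : ℂ))⁻¹ = ((((τ i)⁻¹ : ℝ)) : ℂ) by push_cast; ring,
      show ((p : ℂ)) = (((p : ℝ)) : ℂ) by push_cast; ring,
      Complex.re_ofReal_mul, Complex.re_ofReal_mul]
  rw [hre, Finset.mul_sum, Finset.mul_sum, ← Finset.sum_add_distrib]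
  refine Finset.sum_congr rfl fun i _ => ?_
  rw [hGτ i]
  have hpne : (p : ℝ) ≠ 0 := Nat.cast_ne_zero.mpr hp.ne'
  have hnne : (n : ℝ) ≠ 0 := Nat.cast_ne_zero.mpr hn.ne'
  have hτne : (τ i) ≠ 0 := (hτ i).ne'
  field_simp
  ring
end
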